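/- arXiv:2312.00247 — 2 statements merged into one kernel-verified Lean document; each statement's English description precedes it below -/
import Mathlib

section
/- For n ≥ 2, j ∈ {0,...,n-2}, k ∈ {0,...,n}, and x in the open interval (j/(n-1), (j+1)/(n-1)), the ratio m_{k,n,j}(x) = b_{n,k}(x)/b_{n,j}(x) satisfies m_{k,n,j}(x) ≤ 1, where b_{n,k}(x) = C(n+k-1,k) x^k (1+x)^{-(n+k)}. -/
open Finset Set

/-- Basis functions of the truncated Baskakov operator on `[0,1]`:
`b_{n,k}(x) = C(n+k-1,k) x^k (1+x)^{-(n+k)}`. -/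
noncomputable def bk (n k : ℕ) (x : ℝ) : ℝ :=
  (Nat.choose (n + k - 1) k : ℝ) * x ^ k / (1 + x) ^ (n + k)

/-- Max-product truncated Baskakov operator on `[0,1]`. -/
noncomputable def UM (n : ℕ) (f : ℝ → ℝ) (x : ℝ) : ℝ :=
  ((range (n + 1)).sup' nonempty_range_add_one fun k => bk n k x * f ((k : ℝ) / n)) /
  ((range (n + 1)).sup' nonempty_range_add_one fun k => bk n k x)

/-- Basis functions on a general compact interval `[a,b]`. -/
noncomputable def bkab (a b : ℝ) (n k : ℕ) (x : ℝ) : ℝ :=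
  (Nat.choose (n + k - 1) k : ℝ) * ((x - a) / (b - a)) ^ k /
    ((b - 2 * a + x) / (b - a)) ^ (n + k)

/-- Max-product truncated Baskakov operator on `[a,b]`. -/
noncomputable def UMab (a b : ℝ) (n : ℕ) (f : ℝ → ℝ) (x : ℝ) : ℝ :=
  ((range (n + 1)).sup' nonempty_range_add_one fun k =>
      bkab a b n k x * f (a + (b - a) * k / n)) /
  ((range (n + 1)).sup' nonempty_range_add_one fun k => bkab a b n k x)

/-- Modulus of continuity `ω₁(f;δ)` of `f` on a set `s`. -/
noncomputable def omega1 (f : ℝ → ℝ) (s : Set ℝ) (δ : ℝ) : ℝ :=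
  sSup {d | ∃ x ∈ s, ∃ y ∈ s, |x - y| ≤ δ ∧ d = |f x - f y|}

/-! For fixed `x > 0` the ratio of consecutive basis functions is
`b_{n,k+1}(x) / b_{n,k}(x) = (n + k) x / ((k + 1)(1 + x))`, which is `≤ 1` exactly when
`x (n - 1) ≤ k + 1`. Hence `k ↦ b_{n,k}(x)` increases up to `⌊x (n - 1)⌋` and decreases
after it, and on `(j/(n-1), (j+1)/(n-1))` this mode is `j`. -/

namespace Nat

theorem choose_pred_add_succ_mul {n : ℕ} (hn : 0 < n) (k : ℕ) :
    (n + (k + 1) - 1).choose (k + 1) * (k + 1) = (n + k) * (n + k - 1).choose k := by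
  obtain ⟨m, rfl⟩ := Nat.exists_eq_add_of_lt hn
  simpa [show m + 1 + k = m + k + 1 by omega] using (add_one_mul_choose_eq (m + k) k).symm

end Nat

section Baskakov

variable {n : ℕ} {x : ℝ}

theorem bk_pos (hn : 0 < n) (k : ℕ) (hx : 0 < x) : 0 < bk n k x := by
  have : 0 < (n + k - 1).choose k := Nat.choose_pos (by omega)
  unfold bk
  positivity

theorem bk_succ (hn : 0 < n) (k : ℕ) (hx : 0 < x) :
    bk n (k + 1) x = (n + k) * x / ((k + 1) * (1 + x)) * bk n k x := by
  unfold bk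
  rw [pow_succ x k, show (1 + x) ^ (n + (k + 1)) = (1 + x) ^ (n + k) * (1 + x) from pow_succ _ _]
  field_simp
  exact_mod_cast Nat.choose_pred_add_succ_mul hn k

theorem bk_succ_le_iff (hn : 0 < n) (k : ℕ) (hx : 0 < x) :
    bk n (k + 1) x ≤ bk n k x ↔ x * (n - 1) ≤ k + 1 := by
  rw [bk_succ hn k hx, mul_le_iff_le_one_left (bk_pos hn k hx), div_le_one (by positivity)]
  constructor <;> intro h <;> linarith

theorem bk_le_succ_iff (hn : 0 < n) (k : ℕ) (hx : 0 < x) :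
    bk n k x ≤ bk n (k + 1) x ↔ k + 1 ≤ x * (n - 1) := by
  rw [bk_succ hn k hx, le_mul_iff_one_le_left (bk_pos hn k hx), one_le_div (by positivity)]
  constructor <;> intro h <;> linarith

theorem bk_le_bk_floor (hn : 0 < n) (hx : 0 < x) (k : ℕ) :
    bk n k x ≤ bk n ⌊x * (n - 1)⌋₊ x := by
  have hnonneg : 0 ≤ x * (n - 1) := mul_nonneg hx.le (sub_nonneg.2 (Nat.one_le_cast.2 hn))
  rcases le_total k ⌊x * (n - 1)⌋₊ with hk | hk
  · refine Nat.decreasingInduction (fun i hi ih => ((bk_le_succ_iff hn i hx).2 ?_).trans ih)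
      le_rfl hk
    calc (i : ℝ) + 1 ≤ ⌊x * (n - 1)⌋₊ := by exact_mod_cast hi
      _ ≤ x * (n - 1) := Nat.floor_le hnonneg
  · refine antitoneOn_nat_Ici_of_succ_le (f := (bk n · x))
      (fun i hi => (bk_succ_le_iff hn i hx).2 ?_) Set.self_mem_Ici hk hk
    calc x * (n - 1) ≤ ⌊x * (n - 1)⌋₊ + 1 := (Nat.lt_floor_add_one _).le
      _ ≤ i + 1 := by exact_mod_cast Nat.succ_le_succ hi

end Baskakov

theorem m_knj_le_one_general (n : ℕ) (hn : 2 ≤ n) (j k : ℕ)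
    (x : ℝ) (hx : x ∈ Set.Ioo ((j : ℝ) / ((n : ℝ) - 1)) (((j : ℝ) + 1) / ((n : ℝ) - 1))) :
    bk n k x / bk n j x ≤ 1 := by
  have hn1 : (0 : ℝ) < n - 1 := by
    have : (2 : ℝ) ≤ n := by exact_mod_cast hn
    linarith
  obtain ⟨hjx, hxj⟩ := hx
  rw [div_lt_iff₀ hn1] at hjx
  rw [lt_div_iff₀ hn1] at hxj
  have hx0 : 0 < x := pos_of_mul_pos_left ((Nat.cast_nonneg j).trans_lt hjx) hn1.le
  have hfloor : ⌊x * (n - 1)⌋₊ = j :=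
    (Nat.floor_eq_iff (mul_pos hx0 hn1).le).2 ⟨hjx.le, hxj⟩
  rw [div_le_one (bk_pos (by omega) j hx0), ← hfloor]
  exact bk_le_bk_floor (by omega) hx0 k

theorem m_knj_le_one (n : ℕ) (hn : 2 ≤ n) (j k : ℕ) (hj : j ≤ n - 2) (hk : k ≤ n)
    (x : ℝ) (hx : x ∈ Set.Ioo ((j : ℝ) / ((n : ℝ) - 1)) (((j : ℝ) + 1) / ((n : ℝ) - 1))) :
    bk n k x / bk n j x ≤ 1 :=
  m_knj_le_one_general n hn j k x hx
end

section
/- For n ≥ 2, j ∈ {0,...,n-2}, and x in [j/(n-1), (j+1)/(n-1)], the maximum over k ∈ {0,...,n} of b_{n,k}(x) equals b_{n,j}(x), where b_{n,k}(x) = C(n+k-1,k) x^k (1+x)^{-(n+k)}. -/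
open Finset Set

/-!
The ratio of consecutive basis values is `b_{n,k+1}(x) / b_{n,k}(x) = (n+k) x / ((k+1)(1+x))`,
which is at most `1` exactly when `(n-1) x ≤ k+1`. Hence `k ↦ b_{n,k}(x)` increases while
`k+1 ≤ (n-1) x` and decreases afterwards, so it peaks at any `j` with `(n-1) x ∈ [j, j+1]`.
-/

lemma succ_mul_choose_add_eq (n k : ℕ) :
    (k + 1) * (n + k).choose (k + 1) = (n + k) * (n + k - 1).choose k := by
  rcases Nat.eq_zero_or_eq_succ_pred (n + k) with h | h
  · simp [h]
  · rw [h, Nat.succ_sub_one, mul_comm, ← Nat.add_one_mul_choose_eq]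

lemma bk_succ_mul (n k : ℕ) {x : ℝ} (hx : 1 + x ≠ 0) :
    bk n (k + 1) x * ((k + 1) * (1 + x)) = bk n k x * ((n + k) * x) := by
  have hchoose : ((k : ℝ) + 1) * ((n + k).choose (k + 1) : ℝ) =
      (n + k) * (n + k - 1).choose k := mod_cast succ_mul_choose_add_eq n k
  unfold bk
  rw [Nat.add_succ_sub_one, ← add_assoc, pow_succ x, pow_succ (1 + x)]
  field_simp
  linear_combination x ^ k * x * hchoose

lemma bk_nonneg (n k : ℕ) {x : ℝ} (hx : 0 ≤ x) : 0 ≤ bk n k x := by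
  unfold bk
  positivity

section

variable {n k : ℕ} {x : ℝ}

lemma bk_succ_le (hx : 0 ≤ x) (h : (n - 1 : ℝ) * x ≤ k + 1) : bk n (k + 1) x ≤ bk n k x := by
  refine le_of_mul_le_mul_right ?_ (by positivity : (0 : ℝ) < (k + 1) * (1 + x))
  rw [bk_succ_mul n k (by positivity)]
  exact mul_le_mul_of_nonneg_left (by linarith) (bk_nonneg n k hx)

lemma le_bk_succ (hx : 0 ≤ x) (h : (k + 1 : ℝ) ≤ (n - 1) * x) : bk n k x ≤ bk n (k + 1) x := by
  refine le_of_mul_le_mul_right ?_ (by positivity : (0 : ℝ) < (k + 1) * (1 + x))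
  rw [bk_succ_mul n k (by positivity)]
  exact mul_le_mul_of_nonneg_left (by linarith) (bk_nonneg n k hx)

lemma bk_le_bk_of_mul_mem_Icc {j : ℕ} (hx : 0 ≤ x) (hj : (n - 1 : ℝ) * x ∈ Icc (j : ℝ) (j + 1))
    (k : ℕ) : bk n k x ≤ bk n j x := by
  rcases le_total k j with hkj | hjk
  · refine monotoneOn_of_le_add_one (f := (bk n · x)) ordConnected_Iic
      (fun i _ _ hi ↦ le_bk_succ hx ?_) hkj self_mem_Iic hkj
    exact le_trans (mod_cast hi) hj.1
  · refine antitoneOn_of_add_one_le (f := (bk n · x)) ordConnected_Ici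
      (fun i _ hi _ ↦ bk_succ_le hx ?_) self_mem_Ici hjk hjk
    exact hj.2.trans (by exact_mod_cast Nat.succ_le_succ hi)

end

theorem sup_bk_eq_bkj (n : ℕ) (hn : 2 ≤ n) (j : ℕ) (hj : j ≤ n - 2)
    (x : ℝ) (hx : x ∈ Set.Icc ((j : ℝ) / ((n : ℝ) - 1)) (((j : ℝ) + 1) / ((n : ℝ) - 1))) :
    ((range (n + 1)).sup' nonempty_range_add_one fun k => bk n k x) = bk n j x := by
  have hn1 : (0 : ℝ) < n - 1 := by
    have : (2 : ℝ) ≤ n := mod_cast hn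
    linarith
  have hx0 : 0 ≤ x := (div_nonneg (Nat.cast_nonneg j) hn1.le).trans hx.1
  have hmode : (n - 1 : ℝ) * x ∈ Icc (j : ℝ) (j + 1) := by
    rw [mul_comm]
    exact ⟨(div_le_iff₀ hn1).1 hx.1, (le_div_iff₀ hn1).1 hx.2⟩
  exact le_antisymm (sup'_le _ _ fun k _ ↦ bk_le_bk_of_mul_mem_Icc hx0 hmode k)
    (le_sup' (fun k ↦ bk n k x) (mem_range.2 (by omega)))
end
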